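/- Let β ≥ 1 and define g(x,1) = ∫_ℝ e^{-|ξ|^{2β}} e^{i x ξ} dξ and its derivative ∂_x g(x,1) = ∫_ℝ (iξ) e^{-|ξ|^{2β}} e^{i x ξ} dξ. Then there exists a constant C > 0 depending only on β such that |∂_x g(x,1)| ≤ C (1 + x²)^{-1} for all x ∈ ℝ; in particular ∂_x g(·,1) ∈ L¹(ℝ). -/

import Mathlib

/-!
With `h ξ = i ξ e^{-|ξ|^{2β}}` one has `∂ₓg(x,1) = 𝓕 h (-x/2π)`. For `β ≥ 1` the function `h` is
twice differentiable, and `h, h', h''` are bounded by polynomials in `|ξ|^{2β}` times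
`e^{-|ξ|^{2β}}` (the factor `|ξ|^{2β-2}` of `h''` is bounded near `0` precisely because `β ≥ 1`),
hence by a Gaussian. Thus `|𝓕 h| ≤ ‖h‖₁` and, integrating by parts twice,
`x² |𝓕 h (-x/2π)| ≤ ‖h''‖₁`; adding the two bounds gives the decay `(1 + x²)⁻¹`, which is
integrable.
-/

open MeasureTheory Real

/-- The spatial derivative of the 1D kernel at time `t = 1`:
`∂_x g(x,1) = ∫_ℝ (iξ) e^{-|ξ|^{2β}} e^{i x ξ} dξ`. -/
noncomputable def kernelGDerivOne (β x : ℝ) : ℂ :=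
  ∫ ξ : ℝ, (Complex.I * ξ) * (Real.exp (-|ξ| ^ (2 * β)) : ℂ)
      * Complex.exp (Complex.I * x * ξ)

open FourierTransform
open scoped Nat

section Fourier

variable {E : Type*} [NormedAddCommGroup E] [NormedSpace ℂ E]

theorem Real.norm_fourier_le_integral_norm (f : ℝ → E) (w : ℝ) : ‖𝓕 f w‖ ≤ ∫ x, ‖f x‖ :=
  VectorFourier.norm_fourierIntegral_le_integral_norm _ _ _ _ _

theorem Real.fourier_eq_smul_fourier_of_hasDerivAt {f f' : ℝ → E}
    (hf : ∀ x, HasDerivAt f (f' x) x) (hfi : Integrable f) (hf'i : Integrable f') (w : ℝ) :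
    𝓕 f' w = (2 * π * Complex.I * w) • 𝓕 f w := by
  have hderiv : deriv f = f' := funext fun x => (hf x).deriv
  rw [← hderiv, Real.fourier_deriv hfi (fun x => (hf x).differentiableAt) (hderiv ▸ hf'i)]

theorem Real.sq_mul_norm_fourier_le {f f' f'' : ℝ → E} (hf : ∀ x, HasDerivAt f (f' x) x)
    (hf' : ∀ x, HasDerivAt f' (f'' x) x) (hfi : Integrable f) (hf'i : Integrable f')
    (hf''i : Integrable f'') (w : ℝ) :
    (2 * π * w) ^ 2 * ‖𝓕 f w‖ ≤ ∫ x, ‖f'' x‖ := by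
  have hnorm : ‖(2 * π * Complex.I * w : ℂ)‖ = |2 * π * w| := by
    simp [abs_mul, abs_of_pos pi_pos]
  calc (2 * π * w) ^ 2 * ‖𝓕 f w‖ = ‖𝓕 f'' w‖ := by
        rw [Real.fourier_eq_smul_fourier_of_hasDerivAt hf' hf'i hf''i,
          Real.fourier_eq_smul_fourier_of_hasDerivAt hf hfi hf'i, norm_smul, norm_smul, hnorm,
          ← mul_assoc, abs_mul_abs_self, sq]
    _ ≤ ∫ x, ‖f'' x‖ := Real.norm_fourier_le_integral_norm f'' w

theorem Real.norm_fourier_le_div_one_add_sq {f f' f'' : ℝ → E}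
    (hf : ∀ x, HasDerivAt f (f' x) x) (hf' : ∀ x, HasDerivAt f' (f'' x) x)
    (hfi : Integrable f) (hf'i : Integrable f') (hf''i : Integrable f'') (w : ℝ) :
    ‖𝓕 f w‖ ≤ ((∫ x, ‖f x‖) + ∫ x, ‖f'' x‖) / (1 + (2 * π * w) ^ 2) := by
  rw [le_div_iff₀ (by positivity), mul_one_add, mul_comm ‖𝓕 f w‖]
  exact add_le_add (Real.norm_fourier_le_integral_norm f w)
    (Real.sq_mul_norm_fourier_le hf hf' hfi hf'i hf''i w)

end Fourier

theorem Real.rpow_le_one_add_rpow {x a b : ℝ} (hx : 0 ≤ x) (ha : 0 ≤ a) (hab : a ≤ b) :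
    x ^ a ≤ 1 + x ^ b := by
  rcases le_total x 1 with h | h
  · linarith [Real.rpow_le_one hx h ha, Real.rpow_nonneg hx b]
  · linarith [Real.rpow_le_rpow_of_exponent_le h hab]

theorem Real.one_add_pow_mul_exp_neg_le (n : ℕ) {t : ℝ} (ht : 0 ≤ t) :
    (1 + t) ^ n * exp (-t) ≤ 2 ^ n * n ! * exp (1 / 2) * exp (-(t / 2)) := by
  have hpow : ((1 + t) / 2) ^ n / n ! ≤ exp ((1 + t) / 2) :=
    Real.pow_div_factorial_le_exp (x := (1 + t) / 2) (by positivity) n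
  rw [div_pow, div_div, div_le_iff₀ (by positivity)] at hpow
  have hexp : exp (1 / 2) * exp (-(t / 2)) = exp ((1 + t) / 2) * exp (-t) := by
    rw [← exp_add, ← exp_add]; ring_nf
  calc (1 + t) ^ n * exp (-t) ≤ exp ((1 + t) / 2) * (2 ^ n * n !) * exp (-t) := by gcongr
    _ = 2 ^ n * n ! * exp (1 / 2) * exp (-(t / 2)) := by rw [mul_assoc _ (exp _), hexp]; ring

namespace KernelGDerivOne

/-- `(ξ²)^β = |ξ|^(2β)`, written so that it is differentiable at `0` for `β ≥ 1`. -/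
noncomputable def sqRpow (β ξ : ℝ) : ℝ := (ξ ^ 2) ^ β

variable {β : ℝ}

theorem sqRpow_nonneg (β ξ : ℝ) : 0 ≤ sqRpow β ξ := rpow_nonneg (sq_nonneg ξ) β

theorem abs_rpow_two_mul_eq_sqRpow (β ξ : ℝ) : |ξ| ^ (2 * β) = sqRpow β ξ := by
  rw [sqRpow, ← sq_abs, ← rpow_natCast, ← rpow_mul (abs_nonneg ξ)]
  norm_num

theorem sq_mul_rpow_sub_one (hβ : β ≠ 0) (ξ : ℝ) :
    ξ ^ 2 * (ξ ^ 2) ^ (β - 1) = sqRpow β ξ := by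
  conv_rhs => rw [sqRpow, show β = 1 + (β - 1) by ring]
  rw [rpow_add' (sq_nonneg ξ) (by simpa using hβ), rpow_one]

theorem hasDerivAt_sqRpow (hβ : 1 ≤ β) (ξ : ℝ) :
    HasDerivAt (sqRpow β) (2 * β * ξ * (ξ ^ 2) ^ (β - 1)) ξ := by
  convert (hasDerivAt_pow 2 ξ).rpow_const (p := β) (Or.inr hβ) using 1
  · rfl
  push_cast
  ring

theorem sq_le_one_add_sqRpow (hβ : 1 ≤ β) (ξ : ℝ) : ξ ^ 2 ≤ 1 + sqRpow β ξ := by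
  simpa [sqRpow] using rpow_le_one_add_rpow (sq_nonneg ξ) zero_le_one hβ

theorem rpow_sub_one_le_one_add_sqRpow (hβ : 1 ≤ β) (ξ : ℝ) :
    (ξ ^ 2) ^ (β - 1) ≤ 1 + sqRpow β ξ :=
  rpow_le_one_add_rpow (sq_nonneg ξ) (by linarith) (by linarith)

theorem abs_le_one_add_sqRpow (hβ : 1 ≤ β) (ξ : ℝ) : |ξ| ≤ 1 + sqRpow β ξ := by
  have hsq := sq_le_one_add_sqRpow hβ ξ
  have hr := sqRpow_nonneg β ξ
  rcases le_total |ξ| 1 with h | h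
  · linarith
  · nlinarith [sq_abs ξ]

theorem one_add_sqRpow_pow_mul_exp_neg_le (hβ : 1 ≤ β) (n : ℕ) (ξ : ℝ) :
    (1 + sqRpow β ξ) ^ n * exp (-sqRpow β ξ) ≤ 2 ^ n * n ! * exp 1 * exp (-(1 / 2) * ξ ^ 2) := by
  have hgauss : exp (-(sqRpow β ξ / 2)) ≤ exp (1 / 2) * exp (-(1 / 2) * ξ ^ 2) := by
    rw [← exp_add, exp_le_exp]
    linarith [sq_le_one_add_sqRpow hβ ξ]
  calc (1 + sqRpow β ξ) ^ n * exp (-sqRpow β ξ)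
      ≤ 2 ^ n * n ! * exp (1 / 2) * exp (-(sqRpow β ξ / 2)) :=
        one_add_pow_mul_exp_neg_le n (sqRpow_nonneg β ξ)
    _ ≤ 2 ^ n * n ! * exp (1 / 2) * (exp (1 / 2) * exp (-(1 / 2) * ξ ^ 2)) := by gcongr
    _ = 2 ^ n * n ! * exp 1 * exp (-(1 / 2) * ξ ^ 2) := by
        rw [show exp 1 = exp (1 / 2) * exp (1 / 2) by rw [← exp_add]; norm_num]; ring

theorem integrable_of_abs_le_one_add_sqRpow_pow_mul_exp_neg (hβ : 1 ≤ β) {g : ℝ → ℝ}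
    (hg : AEStronglyMeasurable g) {C : ℝ} (n : ℕ)
    (hle : ∀ ξ, |g ξ| ≤ C * ((1 + sqRpow β ξ) ^ n * exp (-sqRpow β ξ))) : Integrable g := by
  have hC : 0 ≤ C := nonneg_of_mul_nonneg_left ((abs_nonneg _).trans (hle 0))
    (mul_pos (pow_pos (by linarith [sqRpow_nonneg β 0]) n) (exp_pos _))
  refine ((integrable_exp_neg_mul_sq (by norm_num : (0 : ℝ) < 1 / 2)).const_mul
    (C * (2 ^ n * n ! * exp 1))).mono' hg (ae_of_all _ fun ξ => ?_)
  calc ‖g ξ‖ ≤ C * ((1 + sqRpow β ξ) ^ n * exp (-sqRpow β ξ)) := hle ξ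
    _ ≤ C * (2 ^ n * n ! * exp 1 * exp (-(1 / 2) * ξ ^ 2)) :=
        mul_le_mul_of_nonneg_left (one_add_sqRpow_pow_mul_exp_neg_le hβ n ξ) hC
    _ = _ := by ring

noncomputable def profile (β ξ : ℝ) : ℝ := ξ * exp (-sqRpow β ξ)

noncomputable def profileDeriv (β ξ : ℝ) : ℝ := exp (-sqRpow β ξ) * (1 - 2 * β * sqRpow β ξ)

noncomputable def profileDeriv2 (β ξ : ℝ) : ℝ :=
  -(2 * β * ξ * (ξ ^ 2) ^ (β - 1)) * exp (-sqRpow β ξ) * (1 + 2 * β - 2 * β * sqRpow β ξ)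

theorem hasDerivAt_profile (hβ : 1 ≤ β) (ξ : ℝ) :
    HasDerivAt (profile β) (profileDeriv β ξ) ξ := by
  refine ((hasDerivAt_id ξ).mul (hasDerivAt_sqRpow hβ ξ).neg.exp).congr_deriv ?_
  simp only [profileDeriv, id, Pi.neg_apply]
  rw [← sq_mul_rpow_sub_one (by linarith) ξ]
  ring

theorem hasDerivAt_profileDeriv (hβ : 1 ≤ β) (ξ : ℝ) :
    HasDerivAt (profileDeriv β) (profileDeriv2 β ξ) ξ := by
  have hr := hasDerivAt_sqRpow hβ ξ
  refine (hr.neg.exp.mul ((hr.const_mul (2 * β)).const_sub 1)).congr_deriv ?_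
  simp only [profileDeriv2, Pi.neg_apply]
  ring

theorem abs_profile_le (hβ : 1 ≤ β) (ξ : ℝ) :
    |profile β ξ| ≤ 1 * ((1 + sqRpow β ξ) ^ 1 * exp (-sqRpow β ξ)) := by
  rw [profile, abs_mul, abs_exp, one_mul, pow_one]
  gcongr
  exact abs_le_one_add_sqRpow hβ ξ

theorem abs_profileDeriv_le (hβ : 1 ≤ β) (ξ : ℝ) :
    |profileDeriv β ξ| ≤ (1 + 2 * β) * ((1 + sqRpow β ξ) ^ 1 * exp (-sqRpow β ξ)) := by
  have hr := sqRpow_nonneg β ξ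
  have hfactor : |1 - 2 * β * sqRpow β ξ| ≤ (1 + 2 * β) * (1 + sqRpow β ξ) := by
    rw [abs_le]; constructor <;> nlinarith
  rw [profileDeriv, abs_mul, abs_exp, pow_one]
  nlinarith [exp_pos (-sqRpow β ξ)]

theorem abs_profileDeriv2_le (hβ : 1 ≤ β) (ξ : ℝ) :
    |profileDeriv2 β ξ| ≤ 2 * β * (1 + 2 * β) * ((1 + sqRpow β ξ) ^ 3 * exp (-sqRpow β ξ)) := by
  have hr := sqRpow_nonneg β ξ
  have hfactor : |1 + 2 * β - 2 * β * sqRpow β ξ| ≤ (1 + 2 * β) * (1 + sqRpow β ξ) := by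
    rw [abs_le]; constructor <;> nlinarith
  rw [profileDeriv2, abs_mul, abs_mul, abs_neg, abs_mul, abs_mul, abs_exp,
    abs_of_nonneg (rpow_nonneg (sq_nonneg ξ) _), abs_of_nonneg (by linarith : 0 ≤ 2 * β)]
  calc 2 * β * |ξ| * (ξ ^ 2) ^ (β - 1) * exp (-sqRpow β ξ) * |1 + 2 * β - 2 * β * sqRpow β ξ|
      ≤ 2 * β * (1 + sqRpow β ξ) * (1 + sqRpow β ξ) * exp (-sqRpow β ξ)
          * ((1 + 2 * β) * (1 + sqRpow β ξ)) := by
        gcongr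
        · exact abs_le_one_add_sqRpow hβ ξ
        · exact rpow_sub_one_le_one_add_sqRpow hβ ξ
    _ = _ := by ring

theorem integrable_profile (hβ : 1 ≤ β) : Integrable (profile β) :=
  integrable_of_abs_le_one_add_sqRpow_pow_mul_exp_neg hβ
    (continuous_iff_continuousAt.2 fun ξ =>
      (hasDerivAt_profile hβ ξ).continuousAt).aestronglyMeasurable
    1 (abs_profile_le hβ)

theorem integrable_profileDeriv (hβ : 1 ≤ β) : Integrable (profileDeriv β) :=
  integrable_of_abs_le_one_add_sqRpow_pow_mul_exp_neg hβ
    (continuous_iff_continuousAt.2 fun ξ =>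
      (hasDerivAt_profileDeriv hβ ξ).continuousAt).aestronglyMeasurable
    1 (abs_profileDeriv_le hβ)

theorem integrable_profileDeriv2 (hβ : 1 ≤ β) : Integrable (profileDeriv2 β) := by
  have hmeas : Measurable (profileDeriv2 β) := by
    unfold profileDeriv2 sqRpow; fun_prop
  exact integrable_of_abs_le_one_add_sqRpow_pow_mul_exp_neg hβ hmeas.aestronglyMeasurable
    3 (abs_profileDeriv2_le hβ)

end KernelGDerivOne

open KernelGDerivOne

theorem kernelGDerivOne_eq_fourier (β x : ℝ) :
    kernelGDerivOne β x = 𝓕 (fun ξ => Complex.I * profile β ξ) (-(x / (2 * π))) := by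
  rw [kernelGDerivOne, Real.fourier_eq']
  refine integral_congr_ae (ae_of_all _ fun ξ => ?_)
  have hphase : (-2 * π * (-(x / (2 * π)) * ξ) : ℝ) = x * ξ := by field_simp
  simp only [RCLike.inner_apply, conj_trivial, smul_eq_mul, profile, abs_rpow_two_mul_eq_sqRpow]
  rw [hphase]
  push_cast
  ring_nf

/-- For `β ≥ 1` there is `C > 0` (depending only on `β`) with
`|∂_x g(x,1)| ≤ C (1 + x²)⁻¹` for all `x`; in particular `∂_x g(·,1) ∈ L¹(ℝ)`. -/
theorem kernelGDerivOne_decay (β : ℝ) (hβ : 1 ≤ β) :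
    ∃ C > 0, (∀ x : ℝ, ‖kernelGDerivOne β x‖ ≤ C / (1 + x ^ 2)) ∧
      Integrable (fun x => kernelGDerivOne β x) := by
  have hcomplex {g : ℝ → ℝ} (hg : Integrable g) : Integrable fun ξ => Complex.I * g ξ :=
    hg.ofReal.const_mul _
  have hf (ξ : ℝ) := ((hasDerivAt_profile hβ ξ).ofReal_comp).const_mul Complex.I
  have hf' (ξ : ℝ) := ((hasDerivAt_profileDeriv hβ ξ).ofReal_comp).const_mul Complex.I
  set C := (∫ ξ, ‖Complex.I * profile β ξ‖) + (∫ ξ, ‖Complex.I * profileDeriv2 β ξ‖) + 1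
  have hbound (x : ℝ) : ‖kernelGDerivOne β x‖ ≤ C / (1 + x ^ 2) := by
    have hw : (2 * π * -(x / (2 * π))) ^ 2 = x ^ 2 := by field_simp
    rw [kernelGDerivOne_eq_fourier]
    refine (Real.norm_fourier_le_div_one_add_sq hf hf' (hcomplex (integrable_profile hβ))
      (hcomplex (integrable_profileDeriv hβ)) (hcomplex (integrable_profileDeriv2 hβ)) _).trans ?_
    rw [hw]
    gcongr
    linarith
  refine ⟨C, by positivity, hbound, ?_⟩
  have hcont : Continuous fun x => kernelGDerivOne β x := by
    simp only [kernelGDerivOne_eq_fourier]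
    exact (VectorFourier.fourierIntegral_continuous Real.continuous_fourierChar continuous_inner
      (hcomplex (integrable_profile hβ))).comp (by fun_prop)
  refine (integrable_inv_one_add_sq.const_mul C).mono' hcont.aestronglyMeasurable
    (ae_of_all _ fun x => ?_)
  simpa [div_eq_mul_inv] using hbound x
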